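/- In the inhomogeneous random K-out graph H(n; μ, K) with r ≥ 2, 1 ≤ K_1 ≤ … ≤ K_r < n, and μ̃ = Σ_{i=1}^{r−1} μ_i = 1 − μ_r, for each ℓ with 2 ≤ ℓ ≤ ⌊n/2⌋ one has C(n, ℓ) · P[B_{n,ℓ}] ≤ μ̃^ℓ · A_{n,ℓ}, where A_{n,ℓ} = exp( ((1−μ̃)/μ̃) · ℓ · (ℓ/n)^{K_r−1} − (1−μ̃)·(n−ℓ)·(1 − e^{−ℓ(K_r−1)/n}) ). -/

import Mathlib

open Finset Filter

noncomputable section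

/-- A configuration assigns to each vertex a class in `Fin r` and a selection set. -/
abbrev Config (n r : ℕ) := Fin n → Fin r × Finset (Fin n)

/-- Probability weight of a configuration: each vertex `v` independently has class `i`
with probability `μ i`, and given class `i`, its selection set is a uniformly random
`K i`-subset of the other vertices. -/
noncomputable def wt {r : ℕ} (n : ℕ) (μ : Fin r → ℝ) (K : Fin r → ℕ)
    (ω : Config n r) : ℝ :=
  ∏ v : Fin n,
    if (ω v).2.card = K (ω v).1 ∧ v ∉ (ω v).2 then
      μ (ω v).1 / ((n - 1).choose (K (ω v).1) : ℝ)
    else 0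

/-- Probability of an event in the inhomogeneous random K-out graph model. -/
noncomputable def Pr {r : ℕ} (n : ℕ) (μ : Fin r → ℝ) (K : Fin r → ℕ)
    (E : Set (Config n r)) : ℝ :=
  ∑ ω : Config n r, E.indicator (wt n μ K) ω

/-- Expectation of a real-valued random variable in the model. -/
noncomputable def Ex {r : ℕ} (n : ℕ) (μ : Fin r → ℝ) (K : Fin r → ℕ)
    (f : Config n r → ℝ) : ℝ :=
  ∑ ω : Config n r, f ω * wt n μ K ω

/-- The undirected graph induced by a configuration: `u ~ v` iff at least one of
them selected the other. -/
def graphOf {n r : ℕ} (ω : Config n r) : SimpleGraph (Fin n) where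
  Adj u v := u ≠ v ∧ (u ∈ (ω v).2 ∨ v ∈ (ω u).2)
  symm := ⟨fun _ _ h => ⟨h.1.symm, h.2.symm⟩⟩
  loopless := ⟨fun _ h => h.1 rfl⟩

/-- Probability that the inhomogeneous random K-out graph is connected. -/
noncomputable def Pconn {r : ℕ} (n : ℕ) (μ : Fin r → ℝ) (K : Fin r → ℕ) : ℝ :=
  Pr n μ K {ω | (graphOf ω).Connected}

/-- The event `U_{ij}`: vertices `i` and `j` both have class `c`, each selected exactly
the other, and no other vertex selected either of them. -/
def Uevent {n r : ℕ} (c : Fin r) (i j : Fin n) : Set (Config n r) :=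
  {ω | (ω i).1 = c ∧ (ω j).1 = c ∧ (ω i).2 = {j} ∧ (ω j).2 = {i} ∧
    ∀ l : Fin n, l ≠ i → l ≠ j → i ∉ (ω l).2 ∧ j ∉ (ω l).2}

/-- `Y`: the number of isolated components consisting of two class-`c` vertices. -/
noncomputable def Ycount {n r : ℕ} (c : Fin r) (ω : Config n r) : ℝ :=
  ∑ p : Fin n × Fin n,
    if p.1 < p.2 then (Uevent c p.1 p.2).indicator (fun _ => (1 : ℝ)) ω else 0

/-- The event `B_{n,ℓ}`: the set of vertices with index `< ℓ` is isolated, i.e. there is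
no edge between it and its complement. -/
def Bevent (n r : ℕ) (l : ℕ) : Set (Config n r) :=
  {ω | ∀ u v : Fin n, (u : ℕ) < l → ¬ (v : ℕ) < l → u ∉ (ω v).2 ∧ v ∉ (ω u).2}

/-!
Split the vertices into `S = {0, …, ℓ-1}` and its complement. `B_{n,ℓ}` holds iff every vertex
selects only vertices of its own side, so by independence `P[B_{n,ℓ}] = F(ℓ)^ℓ F(n-ℓ)^(n-ℓ)`, where
a vertex on a side of size `m` stays inside with probability
`F(m) = ∑_c μ_c C(m-1, K_c) / C(n-1, K_c) ≤ ∑_c μ_c (m/n)^{K_c}`.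
Bounding `x^{K_c} ≤ x` for the classes `c ≠ r` gives `F(m) ≤ (m/n) (μ̃ + (1-μ̃)(m/n)^{K_r-1})`.
The factors `(ℓ/n)^ℓ ((n-ℓ)/n)^(n-ℓ)` are absorbed by `C(n,ℓ)`, since `C(n,ℓ) p^ℓ q^(n-ℓ) ≤ (p+q)^n = 1`,
and the remaining two powers are bounded with `1 + x ≤ eˣ`.
-/

open Real

namespace Nat

theorem descFactorial_mul_pow_le_descFactorial_mul_pow {a b : ℕ} (h : a ≤ b) (k : ℕ) :
    a.descFactorial k * b ^ k ≤ b.descFactorial k * a ^ k := by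
  induction k with
  | zero => simp
  | succ k ih =>
    have hstep : (a - k) * b ≤ (b - k) * a := by
      rw [Nat.sub_mul, Nat.sub_mul, mul_comm b a]
      exact Nat.sub_le_sub_left (Nat.mul_le_mul_left k h) _
    calc a.descFactorial (k + 1) * b ^ (k + 1)
        = ((a - k) * b) * (a.descFactorial k * b ^ k) := by
          rw [descFactorial_succ, pow_succ]; ring
      _ ≤ ((b - k) * a) * (b.descFactorial k * a ^ k) := Nat.mul_le_mul hstep ih
      _ = b.descFactorial (k + 1) * a ^ (k + 1) := by
          rw [descFactorial_succ, pow_succ]; ring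

theorem choose_mul_pow_le_choose_mul_pow {a b : ℕ} (h : a ≤ b) (k : ℕ) :
    a.choose k * b ^ k ≤ b.choose k * a ^ k := by
  have := descFactorial_mul_pow_le_descFactorial_mul_pow h k
  rw [descFactorial_eq_factorial_mul_choose, descFactorial_eq_factorial_mul_choose,
    mul_assoc, mul_assoc] at this
  exact Nat.le_of_mul_le_mul_left this k.factorial_pos

theorem cast_choose_div_cast_choose_le {a b : ℕ} (h : a ≤ b) (k : ℕ) :
    (a.choose k : ℝ) / b.choose k ≤ ((a : ℝ) / b) ^ k := by
  rcases b.eq_zero_or_pos with rfl | hb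
  · obtain rfl : a = 0 := Nat.le_zero.1 h
    cases k <;> simp
  refine div_le_of_le_mul₀ (by positivity) (by positivity) ?_
  rw [div_pow, div_mul_eq_mul_div, le_div_iff₀ (by positivity), mul_comm _ (b.choose k : ℝ)]
  exact_mod_cast choose_mul_pow_le_choose_mul_pow h k

theorem cast_sub_one_div_cast_sub_one_le {m n : ℕ} (h : m ≤ n) :
    ((m - 1 : ℕ) : ℝ) / (n - 1 : ℕ) ≤ (m : ℝ) / n := by
  rcases Nat.lt_or_ge n 2 with hn | hn
  · rw [Nat.sub_eq_zero_of_le (by omega : n ≤ 1), cast_zero, div_zero]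
    positivity
  rcases m.eq_zero_or_pos with rfl | hm
  · simp
  rw [div_le_div_iff₀ (by norm_cast; omega) (by norm_cast; omega),
    cast_sub hm, cast_sub (by omega : 1 ≤ n)]
  have : (m : ℝ) ≤ n := by exact_mod_cast h
  push_cast
  nlinarith

end Nat

theorem choose_mul_pow_mul_pow_le_one {p q : ℝ} (hp : 0 ≤ p) (hq : 0 ≤ q) (hpq : p + q = 1)
    {n l : ℕ} (hl : l ≤ n) : (n.choose l : ℝ) * (p ^ l * q ^ (n - l)) ≤ 1 :=
  calc (n.choose l : ℝ) * (p ^ l * q ^ (n - l))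
      = p ^ l * q ^ (n - l) * n.choose l := by ring
    _ ≤ ∑ k ∈ range (n + 1), p ^ k * q ^ (n - k) * n.choose k :=
      single_le_sum (f := fun k => p ^ k * q ^ (n - k) * (n.choose k : ℝ))
        (fun _ _ => by positivity) (mem_range.2 (Nat.lt_succ_of_le hl))
    _ = 1 := by rw [← add_pow, hpq, one_pow]

theorem choose_mul_pow_mul_pow_le_of_le_mul {p q a b X Y : ℝ} (hp : 0 ≤ p) (hq : 0 ≤ q)
    (hpq : p + q = 1) (ha : 0 ≤ a) (hb : 0 ≤ b) (hX : 0 ≤ X) (hY : 0 ≤ Y)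
    (hXa : X ≤ p * a) (hYb : Y ≤ q * b) {n l : ℕ} (hl : l ≤ n) :
    (n.choose l : ℝ) * (X ^ l * Y ^ (n - l)) ≤ a ^ l * b ^ (n - l) :=
  calc (n.choose l : ℝ) * (X ^ l * Y ^ (n - l))
      ≤ (n.choose l : ℝ) * ((p * a) ^ l * (q * b) ^ (n - l)) := by gcongr
    _ = ((n.choose l : ℝ) * (p ^ l * q ^ (n - l))) * (a ^ l * b ^ (n - l)) := by ring
    _ ≤ 1 * (a ^ l * b ^ (n - l)) := by
      gcongr
      exact choose_mul_pow_mul_pow_le_one hp hq hpq hl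
    _ = a ^ l * b ^ (n - l) := one_mul _

theorem add_le_mul_exp_div {a : ℝ} (ha : 0 < a) (y : ℝ) : a + y ≤ a * exp (y / a) :=
  calc a + y = a * (y / a + 1) := by field_simp; ring
    _ ≤ a * exp (y / a) := by gcongr; exact add_one_le_exp _

theorem sub_div_pow_le_exp {a b : ℝ} (ha : 0 < a) (hb : b ≤ a) (k : ℕ) :
    ((a - b) / a) ^ k ≤ exp (-(b * k) / a) :=
  calc ((a - b) / a) ^ k = (1 - b / a) ^ k := by rw [sub_div, div_self ha.ne']
    _ ≤ exp (-(b / a)) ^ k :=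
        pow_le_pow_left₀ (by rw [sub_nonneg]; exact div_le_one_of_le₀ hb ha.le)
          (one_sub_le_exp_neg _) k
    _ = exp (-(b * k) / a) := by rw [← exp_nat_mul]; ring_nf

theorem add_mul_le_exp_neg {a b y z : ℝ} (hab : a + b = 1) (hb : 0 ≤ b) (hyz : y ≤ z) :
    a + b * y ≤ exp (-(b * (1 - z))) :=
  calc a + b * y ≤ 1 - b * (1 - z) := by nlinarith
    _ ≤ exp (-(b * (1 - z))) := one_sub_le_exp_neg _

theorem add_mul_pow_mul_add_mul_pow_le_exp {a x y z : ℝ} (ha : 0 < a) (ha1 : a ≤ 1)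
    (hx : 0 ≤ x) (hy : 0 ≤ y) (hyz : y ≤ z) (l m : ℕ) :
    (a + (1 - a) * x) ^ l * (a + (1 - a) * y) ^ m ≤
      a ^ l * exp (l * ((1 - a) * x / a) - m * ((1 - a) * (1 - z))) := by
  have hb : 0 ≤ 1 - a := sub_nonneg.2 ha1
  have hbase : ∀ t : ℝ, 0 ≤ t → 0 ≤ a + (1 - a) * t :=
    fun t ht => add_nonneg ha.le (mul_nonneg hb ht)
  calc (a + (1 - a) * x) ^ l * (a + (1 - a) * y) ^ m
      ≤ (a * exp ((1 - a) * x / a)) ^ l * exp (-((1 - a) * (1 - z))) ^ m :=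
        mul_le_mul (pow_le_pow_left₀ (hbase x hx) (add_le_mul_exp_div ha _) l)
          (pow_le_pow_left₀ (hbase y hy) (add_mul_le_exp_neg (by ring) hb hyz) m)
          (pow_nonneg (hbase y hy) m) (by positivity)
    _ = a ^ l * exp (l * ((1 - a) * x / a) - m * ((1 - a) * (1 - z))) := by
        rw [mul_pow, mul_assoc, ← exp_nat_mul, ← exp_nat_mul, ← exp_add]
        ring_nf

theorem sum_mul_pow_le {r : ℕ} {μ : Fin r → ℝ} {K : Fin r → ℕ} (hμ : ∀ c, 0 ≤ μ c)
    (hK : ∀ c, 1 ≤ K c) (j : Fin r) {x : ℝ} (hx0 : 0 ≤ x) (hx1 : x ≤ 1) :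
    ∑ c, μ c * x ^ K c ≤ x * (∑ c ∈ univ.erase j, μ c + μ j * x ^ (K j - 1)) := by
  have hj : μ j * x ^ K j = x * (μ j * x ^ (K j - 1)) := by
    rw [← Nat.sub_add_cancel (hK j), pow_succ, Nat.add_sub_cancel]; ring
  have hrest : ∑ c ∈ univ.erase j, μ c * x ^ K c ≤ x * ∑ c ∈ univ.erase j, μ c := by
    rw [mul_sum]
    refine sum_le_sum fun c _ => ?_
    rw [mul_comm x]
    exact mul_le_mul_of_nonneg_left (pow_le_of_le_one hx0 hx1 (by have := hK c; omega)) (hμ c)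
  rw [← add_sum_erase _ _ (mem_univ j), hj]
  linarith

theorem Fin.card_filter_not_val_lt (n l : ℕ) : #{v : Fin n | ¬(v : ℕ) < l} = n - l := by
  have := card_filter_add_card_filter_not (s := univ) fun v : Fin n => (v : ℕ) < l
  rw [Fin.card_filter_val_lt, card_univ, Fintype.card_fin] at this
  omega

section KOut

variable {n r : ℕ} (μ : Fin r → ℝ) (K : Fin r → ℕ)

def vertexWt (v : Fin n) (x : Fin r × Finset (Fin n)) : ℝ :=
  if x.2.card = K x.1 ∧ v ∉ x.2 then μ x.1 / ((n - 1).choose (K x.1) : ℝ) else 0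

theorem Pr_forall_mem (A : Fin n → Set (Fin r × Finset (Fin n))) :
    Pr n μ K {ω | ∀ v, ω v ∈ A v} = ∏ v, ∑ x, (A v).indicator (vertexWt μ K v) x := by
  rw [Finset.prod_univ_sum, Fintype.piFinset_univ, Pr]
  refine sum_congr rfl fun ω _ => ?_
  by_cases hω : ω ∈ {ω : Config n r | ∀ v, ω v ∈ A v}
  · rw [Set.indicator_of_mem hω, wt]
    exact prod_congr rfl fun v _ => (Set.indicator_of_mem (hω v) (vertexWt μ K v)).symm
  · obtain ⟨v, hv⟩ := not_forall.1 hω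
    rw [Set.indicator_of_notMem hω]
    exact (prod_eq_zero (mem_univ v) (Set.indicator_of_notMem hv _)).symm

def insideProb (n m : ℕ) : ℝ :=
  ∑ c, μ c * (((m - 1).choose (K c) : ℝ) / (n - 1).choose (K c))

theorem sum_indicator_vertexWt_subset {v : Fin n} {T : Finset (Fin n)} (hv : v ∈ T) :
    ∑ x, {x : Fin r × Finset (Fin n) | x.2 ⊆ T}.indicator (vertexWt μ K v) x =
      insideProb μ K n #T := by
  rw [insideProb, Fintype.sum_prod_type]
  refine sum_congr rfl fun c _ => ?_
  have hterm : ∀ S : Finset (Fin n),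
      {x : Fin r × Finset (Fin n) | x.2 ⊆ T}.indicator (vertexWt μ K v) (c, S) =
        if S ∈ powersetCard (K c) (T.erase v) then μ c / (n - 1).choose (K c) else 0 := by
    intro S
    simp only [Set.indicator_apply, vertexWt, mem_powersetCard, subset_erase]
    split_ifs <;> simp_all
  rw [sum_congr rfl fun S _ => hterm S, sum_ite_mem, univ_inter, sum_const, card_powersetCard,
    card_erase_of_mem hv, nsmul_eq_mul]
  ring

def sameSide (l : ℕ) (v : Fin n) : Finset (Fin n) := {w | (w : ℕ) < l ↔ (v : ℕ) < l}

theorem mem_sameSide_self (l : ℕ) (v : Fin n) : v ∈ sameSide l v := by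
  simp [sameSide]

theorem card_sameSide {l : ℕ} (hl : l ≤ n) (v : Fin n) :
    #(sameSide l v) = if (v : ℕ) < l then l else n - l := by
  unfold sameSide
  split_ifs with hv
  · simp only [hv, iff_true, Fin.card_filter_val_lt, min_eq_right hl]
  · simp only [hv, iff_false, Fin.card_filter_not_val_lt]

theorem Bevent_eq_forall_subset (l : ℕ) :
    Bevent n r l = {ω | ∀ v, ω v ∈ {x : Fin r × Finset (Fin n) | x.2 ⊆ sameSide l v}} := by
  ext ω
  simp only [Bevent, sameSide, Set.mem_ofPred_eq, subset_iff, mem_filter, mem_univ, true_and]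
  constructor
  · intro h v w hw
    by_cases hv : (v : ℕ) < l
    · exact iff_of_true (by_contra fun hw' => (h v w hv hw').2 hw) hv
    · exact iff_of_false (fun hw' => (h w v hw' hv).1 hw) hv
  · intro h u v hu hv
    exact ⟨fun hm => hv ((h v hm).1 hu), fun hm => hv ((h u hm).2 hu)⟩

theorem Pr_Bevent {l : ℕ} (hl : l ≤ n) :
    Pr n μ K (Bevent n r l) = insideProb μ K n l ^ l * insideProb μ K n (n - l) ^ (n - l) := by
  rw [Bevent_eq_forall_subset, Pr_forall_mem]
  simp_rw [sum_indicator_vertexWt_subset μ K (mem_sameSide_self l _), card_sameSide hl,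
    apply_ite (insideProb μ K n)]
  rw [prod_ite, prod_const, prod_const, Fin.card_filter_val_lt, min_eq_right hl,
    Fin.card_filter_not_val_lt]

theorem insideProb_le (hμ : ∀ c, 0 ≤ μ c) {m : ℕ} (hm : m ≤ n) :
    insideProb μ K n m ≤ ∑ c, μ c * ((m : ℝ) / n) ^ K c := by
  refine sum_le_sum fun c _ => mul_le_mul_of_nonneg_left ?_ (hμ c)
  calc ((m - 1).choose (K c) : ℝ) / (n - 1).choose (K c)
      ≤ (((m - 1 : ℕ) : ℝ) / (n - 1 : ℕ)) ^ K c :=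
        Nat.cast_choose_div_cast_choose_le (by omega) _
    _ ≤ ((m : ℝ) / n) ^ K c :=
        pow_le_pow_left₀ (by positivity) (Nat.cast_sub_one_div_cast_sub_one_le hm) _

theorem insideProb_le_mul (hμ : ∀ c, 0 ≤ μ c) (hK : ∀ c, 1 ≤ K c) (j : Fin r) {m : ℕ}
    (hm : m ≤ n) :
    insideProb μ K n m ≤
      (m / n) * (∑ c ∈ univ.erase j, μ c + μ j * ((m : ℝ) / n) ^ (K j - 1)) :=
  (insideProb_le μ K hμ hm).trans <| sum_mul_pow_le hμ hK j (by positivity) <|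
    div_le_one_of_le₀ (by exact_mod_cast hm) (by positivity)

theorem insideProb_nonneg (hμ : ∀ c, 0 ≤ μ c) (m : ℕ) : 0 ≤ insideProb μ K n m :=
  sum_nonneg fun c _ => mul_nonneg (hμ c) (by positivity)

theorem choose_mul_Pr_Bevent_le (hn : 0 < n) (hμ : ∀ c, 0 ≤ μ c) (hK : ∀ c, 1 ≤ K c)
    (j : Fin r) {l : ℕ} (hl : l ≤ n) :
    (n.choose l : ℝ) * Pr n μ K (Bevent n r l) ≤
      (∑ c ∈ univ.erase j, μ c + μ j * ((l : ℝ) / n) ^ (K j - 1)) ^ l *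
        (∑ c ∈ univ.erase j, μ c + μ j * (((n - l : ℕ) : ℝ) / n) ^ (K j - 1)) ^ (n - l) := by
  have hpq : (l : ℝ) / n + ((n - l : ℕ) : ℝ) / n = 1 := by
    rw [Nat.cast_sub hl]; field_simp; ring
  have hnonneg : ∀ x : ℝ, 0 ≤ x → 0 ≤ ∑ c ∈ univ.erase j, μ c + μ j * x ^ (K j - 1) :=
    fun x hx => add_nonneg (sum_nonneg fun c _ => hμ c) (mul_nonneg (hμ j) (pow_nonneg hx _))
  rw [Pr_Bevent μ K hl]
  exact choose_mul_pow_mul_pow_le_of_le_mul (by positivity) (by positivity) hpq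
    (hnonneg _ (by positivity)) (hnonneg _ (by positivity)) (insideProb_nonneg μ K hμ l)
    (insideProb_nonneg μ K hμ (n - l)) (insideProb_le_mul μ K hμ hK j hl)
    (insideProb_le_mul μ K hμ hK j (Nat.sub_le n l)) hl

end KOut

theorem choose_mul_prob_B_upper_general
    (r : ℕ) (hr : 2 ≤ r) (μ : Fin r → ℝ)
    (hμ : ∀ i, 0 < μ i) (hsum : ∑ i, μ i = 1)
    (lst : Fin r)
    (μt : ℝ) (hμt : μt = ∑ i ∈ Finset.univ.erase lst, μ i)
    (n : ℕ)
    (K : Fin r → ℕ) (hone : ∀ i, 1 ≤ K i) (hlt : ∀ i, K i < n)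
    (l : ℕ) (hl : l ≤ n / 2) :
    (n.choose l : ℝ) * Pr n μ K (Bevent n r l) ≤
      μt ^ l *
        Real.exp (((1 - μt) / μt) * (l : ℝ) * ((l : ℝ) / (n : ℝ)) ^ (K lst - 1) -
          (1 - μt) * ((n : ℝ) - (l : ℝ)) *
            (1 - Real.exp (-((l : ℝ) * ((K lst : ℝ) - 1)) / (n : ℝ)))) := by
  have hln : l ≤ n := hl.trans (Nat.div_le_self n 2)
  have hn : 0 < n := (Nat.zero_le _).trans_lt (hlt lst)
  have hnl : ((n - l : ℕ) : ℝ) = n - l := Nat.cast_sub hln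
  have hμlst : μ lst = 1 - μt := by
    rw [hμt, ← hsum, ← add_sum_erase _ _ (mem_univ lst)]; ring
  have hμt0 : 0 < μt := hμt ▸ sum_pos (fun i _ => hμ i) (card_pos.1 (by
    rw [card_erase_of_mem (mem_univ _), card_univ, Fintype.card_fin]; omega))
  set E := Real.exp (-((l : ℝ) * ((K lst : ℝ) - 1)) / (n : ℝ))
  have hqE : (((n - l : ℕ) : ℝ) / n) ^ (K lst - 1) ≤ E := by
    have := sub_div_pow_le_exp (Nat.cast_pos.2 hn) (Nat.cast_le.2 hln) (K lst - 1)
    rwa [← hnl, Nat.cast_sub (hone lst), Nat.cast_one] at this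
  calc (n.choose l : ℝ) * Pr n μ K (Bevent n r l)
      ≤ (μt + (1 - μt) * ((l : ℝ) / n) ^ (K lst - 1)) ^ l *
          (μt + (1 - μt) * (((n - l : ℕ) : ℝ) / n) ^ (K lst - 1)) ^ (n - l) := by
        simpa only [← hμt, hμlst] using
          choose_mul_Pr_Bevent_le μ K hn (fun c => (hμ c).le) hone lst hln
    _ ≤ μt ^ l * exp (l * ((1 - μt) * ((l : ℝ) / n) ^ (K lst - 1) / μt) -
          (n - l : ℕ) * ((1 - μt) * (1 - E))) :=
        add_mul_pow_mul_add_mul_pow_le_exp hμt0 (by linarith [hμ lst]) (by positivity)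
          (by positivity) hqE l (n - l)
    _ = _ := by
        rw [hnl]
        congr 2
        ring

/-- eq. (21)–(22) of the paper. For `2 ≤ ℓ ≤ ⌊n/2⌋`,
`C(n,ℓ)·P[B_{n,ℓ}] ≤ μ̃^ℓ · A_{n,ℓ}` where
`A_{n,ℓ} = exp(((1−μ̃)/μ̃)·ℓ·(ℓ/n)^{K_r−1} − (1−μ̃)(n−ℓ)(1 − e^{−ℓ(K_r−1)/n}))`. -/
theorem choose_mul_prob_B_upper
    (r : ℕ) (hr : 2 ≤ r) (μ : Fin r → ℝ)
    (hμ : ∀ i, 0 < μ i) (hsum : ∑ i, μ i = 1)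
    (lst : Fin r) (hlst : (lst : ℕ) = r - 1)
    (μt : ℝ) (hμt : μt = ∑ i ∈ Finset.univ.erase lst, μ i)
    (n : ℕ) (hn : 2 ≤ n)
    (K : Fin r → ℕ) (hmono : Monotone K) (hone : ∀ i, 1 ≤ K i) (hlt : ∀ i, K i < n)
    (l : ℕ) (hl2 : 2 ≤ l) (hl : l ≤ n / 2) :
    (n.choose l : ℝ) * Pr n μ K (Bevent n r l) ≤
      μt ^ l *
        Real.exp (((1 - μt) / μt) * (l : ℝ) * ((l : ℝ) / (n : ℝ)) ^ (K lst - 1) -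
          (1 - μt) * ((n : ℝ) - (l : ℝ)) *
            (1 - Real.exp (-((l : ℝ) * ((K lst : ℝ) - 1)) / (n : ℝ)))) :=
  choose_mul_prob_B_upper_general r hr μ hμ hsum lst μt hμt n K hone hlt l hl
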